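/- Let r ≥ 2, let F be a graph, set t = (r−2)|E(F)| + |V(F)|, and let 2 ≤ i ≤ r. If an r-graph G is F^{(r)+}-free, then the i-graph whose hyperedges are the i-element vertex sets of G that are t-fat with respect to G is F^{(i)+}-free. -/

import Mathlib

open Finset
open scoped Classical

/-- An `r`-uniform hypergraph on vertex type `V`: a finite set of `r`-element
vertex subsets, the hyperedges. -/
structure HyperGraph (V : Type*) (r : ℕ) where
  edges : Finset (Finset V)
  uniform : ∀ e ∈ edges, e.card = r

namespace HyperGraph

variable {V α : Type*}

/-- A witness that the `r`-graph `G` contains a copy of the `r`-uniform expansion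
`F^{(r)+}` of the graph `F`, with core embedding `φ` and, for each edge of `F`, a set
of `r - 2` expansion vertices given by `S`.  The expansion vertices avoid the core and
are pairwise disjoint over distinct edges. -/
def IsExpansionWitness [DecidableEq V] {r : ℕ} (G : HyperGraph V r) (F : SimpleGraph α)
    (φ : α ↪ V) (S : Sym2 α → Finset V) : Prop :=
  (∀ a b, F.Adj a b → (S s(a, b)).card = r - 2) ∧
  (∀ a b, F.Adj a b → ∀ x ∈ S s(a, b), x ∉ Set.range φ) ∧
  (∀ e ∈ F.edgeSet, ∀ e' ∈ F.edgeSet, e ≠ e' → Disjoint (S e) (S e')) ∧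
  (∀ a b, F.Adj a b → insert (φ a) (insert (φ b) (S s(a, b))) ∈ G.edges)

/-- The `r`-graph `G` contains a copy of the expansion `F^{(r)+}` (i.e. a subhypergraph
isomorphic to it). -/
def ContainsExpansion [DecidableEq V] {r : ℕ} (G : HyperGraph V r) (F : SimpleGraph α) : Prop :=
  ∃ φ S, G.IsExpansionWitness F φ S

end HyperGraph

/-- `ex_r(n, F^{(r)+})`: the maximum number of hyperedges in an `n`-vertex
`F^{(r)+}`-free `r`-graph. -/
noncomputable def exExpansion (r n : ℕ) {α : Type*} (F : SimpleGraph α) : ℕ :=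
  sSup {m | ∃ G : HyperGraph (Fin n) r, ¬ G.ContainsExpansion F ∧ G.edges.card = m}

/-- `F` is contained in `G` as a (not necessarily induced) subgraph. -/
def GraphContains {α β : Type*} (F : SimpleGraph α) (G : SimpleGraph β) : Prop :=
  ∃ f : α ↪ β, ∀ a b, F.Adj a b → G.Adj (f a) (f b)

/-- The number of copies of `K_r` (i.e. `r`-cliques) in the graph `G`. -/
noncomputable def cliqueCount {V : Type*} [Fintype V] (G : SimpleGraph V) (r : ℕ) : ℕ :=
  Nat.card {s : Finset V // G.IsNClique r s}

/-- The generalized Turán number `ex(n, K_r, F)`: the maximum number of `r`-cliques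
in an `n`-vertex `F`-free graph. -/
noncomputable def exClique (n r : ℕ) {α : Type*} (F : SimpleGraph α) : ℕ :=
  sSup {m | ∃ G : SimpleGraph (Fin n), ¬ GraphContains F G ∧ cliqueCount G r = m}

/-- The number of copies of the complete `p`-uniform hypergraph `K_r^p` in a `p`-graph `G`:
the number of `r`-element vertex sets all of whose `p`-subsets are hyperedges. -/
noncomputable def hyperCliqueCount {V : Type*} [Fintype V] {p : ℕ} (G : HyperGraph V p)
    (r : ℕ) : ℕ :=
  Nat.card {R : Finset V // R.card = r ∧ ∀ e ⊆ R, e.card = p → e ∈ G.edges}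

/-- `ex_p(n, K_r^p, F^{(p)+})`: the maximum number of copies of `K_r^p` in an `n`-vertex
`F^{(p)+}`-free `p`-graph. -/
noncomputable def exHyperClique (p r n : ℕ) {α : Type*} (F : SimpleGraph α) : ℕ :=
  sSup {m | ∃ G : HyperGraph (Fin n) p, ¬ G.ContainsExpansion F ∧ hyperCliqueCount G r = m}

/-- `G` contains (a subgraph isomorphic to) a member of the decomposition family `D(F)`:
a bipartite graph obtained from a proper `(k+1)`-coloring of `F` by deleting `k - 1`
color classes. -/
def ContainsDecompMember {α β : Type*} (F : SimpleGraph α) (k : ℕ) (G : SimpleGraph β) : Prop :=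
  ∃ c : α → Fin (k + 1), (∀ a b, F.Adj a b → c a ≠ c b) ∧
    ∃ i j : Fin (k + 1), i ≠ j ∧ GraphContains (F.induce {a | c a = i ∨ c a = j}) G

/-- `biex(n, F)`: the maximum number of edges of an `n`-vertex graph containing no member
of the decomposition family `D(F)` (for a graph `F` of chromatic number `k+1`). -/
noncomputable def biex (n : ℕ) {α : Type*} (F : SimpleGraph α) (k : ℕ) : ℕ :=
  sSup {m | ∃ G : SimpleGraph (Fin n), ¬ ContainsDecompMember F k G ∧ Nat.card G.edgeSet = m}

/-- `t_r(n,k)`: the number of hyperedges of the complete balanced `k`-partite `r`-graph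
`T_r(n,k)` (realized on `Fin n` with the balanced partition `v ↦ v % k`). -/
noncomputable def turanHyperCount (r n k : ℕ) : ℕ :=
  Nat.card {e : Finset (Fin n) // e.card = r ∧
    Set.InjOn (fun v : Fin n => v.val % k) ↑e}

/-- `|E(T_r(n,k,i))|`: the number of hyperedges of the `r`-graph obtained from `T_r(n-i,k)`
by adding `i` new vertices (here the vertices with value `< i`) and all `r`-sets containing
at least one of them. -/
noncomputable def turanPlusCount (r n k i : ℕ) : ℕ :=
  Nat.card {e : Finset (Fin n) // e.card = r ∧
    ((∃ v ∈ e, v.val < i) ∨ Set.InjOn (fun v : Fin n => (v.val - i) % k) ↑e)}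

/-- `G` has a color-critical edge: an edge whose deletion decreases the chromatic number. -/
def HasColorCriticalEdge {β : Type*} (G : SimpleGraph β) : Prop :=
  ∃ a b, G.Adj a b ∧ (G.deleteEdges {s(a, b)}).chromaticNumber < G.chromaticNumber

/-- `B_{k+1,1}`: two copies of `K_{k+1}` sharing exactly one vertex (the vertex `k`). -/
def bowtie (k : ℕ) : SimpleGraph (Fin (2 * k + 1)) :=
  SimpleGraph.fromRel (fun a b => (a.val ≤ k ∧ b.val ≤ k) ∨ (k ≤ a.val ∧ k ≤ b.val))

/-- The `r`-graph `H'(m)` on `n` vertices: a complete `k`-partite `r`-graph with one part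
`V_1` of size `m` (the vertices with value `< m`) and `k-1` balanced parts on the remaining
vertices, together with all `r`-sets containing both `u` (the vertex `0`) and `v` (the
vertex `1`), and all `r`-sets containing `u` and `r-1` vertices outside `V_1`. -/
noncomputable def HprimeGraph (r n k m : ℕ) : HyperGraph (Fin n) r :=
  ⟨Finset.univ.filter (fun e : Finset (Fin n) => e.card = r ∧
      (Set.InjOn (fun v : Fin n => if v.val < m then 0 else (v.val - m) % (k - 1) + 1) ↑e
        ∨ ((∃ a ∈ e, a.val = 0) ∧ (∃ b ∈ e, b.val = 1))
        ∨ ((∃ a ∈ e, a.val = 0) ∧ ∀ w ∈ e, w.val ≠ 0 → m ≤ w.val))),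
    fun e he => ((Finset.mem_filter.mp he).2).1⟩

/-- `Δ*(t)G`: the `(r-1)`-graph of `t`-heavy `(r-1)`-sets, i.e. the `(r-1)`-element
vertex sets contained in at least `t` hyperedges of `G`. -/
noncomputable def shadowOp {V : Type*} [Fintype V] [DecidableEq V] {r : ℕ} (t : ℕ)
    (G : HyperGraph V r) : HyperGraph V (r - 1) :=
  ⟨Finset.univ.filter (fun A : Finset V =>
      A.card = r - 1 ∧ t ≤ (G.edges.filter (fun e => A ⊆ e)).card),
    fun A hA => ((Finset.mem_filter.mp hA).2).1⟩

/-- Iterated shadow operator: `iterShadow t G j = (Δ*(t))^j G`, a `(r-j)`-graph. -/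
noncomputable def iterShadow {V : Type*} [Fintype V] [DecidableEq V] (t : ℕ) {r : ℕ}
    (G : HyperGraph V r) : (j : ℕ) → HyperGraph V (r - j)
  | 0 => G
  | j + 1 => shadowOp t (iterShadow t G j)

/-- A vertex set `A` is `t`-fat with respect to `G`: there are at least `t` hyperedges
of `G` whose pairwise intersections all equal `A`. -/
def TFat {V : Type*} [DecidableEq V] {r : ℕ} (t : ℕ) (G : HyperGraph V r)
    (A : Finset V) : Prop :=
  ∃ E : Finset (Finset V), E ⊆ G.edges ∧ t ≤ E.card ∧
    ∀ e ∈ E, ∀ e' ∈ E, e ≠ e' → e ∩ e' = A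

/-- The graph `G(𝒢)` of `t`-fat pairs of the `r`-graph `G`. -/
def fatGraph {V : Type*} [DecidableEq V] {r : ℕ} (t : ℕ) (G : HyperGraph V r) :
    SimpleGraph V :=
  SimpleGraph.fromRel (fun x y => TFat t G {x, y})

/-- The `i`-graph whose hyperedges are the `t`-fat `i`-element vertex sets of `G`. -/
noncomputable def fatHyper {V : Type*} [Fintype V] [DecidableEq V] {r : ℕ} (t i : ℕ)
    (G : HyperGraph V r) : HyperGraph V i :=
  ⟨Finset.univ.filter (fun A : Finset V => A.card = i ∧ TFat t G A),
    fun A hA => ((Finset.mem_filter.mp hA).2).1⟩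

/-- The `r`-graph whose hyperedges are the vertex sets of the `r`-cliques of `G`. -/
noncomputable def cliqueHyper {V : Type*} [Fintype V] (G : SimpleGraph V) (r : ℕ) :
    HyperGraph V r :=
  ⟨Finset.univ.filter (fun e : Finset V => G.IsNClique r e),
    fun e he => ((Finset.mem_filter.mp he).2).card_eq⟩

/-- The `r`-graph on `n` vertices whose hyperedges are all `r`-sets containing the
fixed vertex `0`. -/
noncomputable def starHyper (n r : ℕ) : HyperGraph (Fin n) r :=
  ⟨Finset.univ.filter (fun e : Finset (Fin n) => e.card = r ∧ ∃ a ∈ e, a.val = 0),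
    fun e he => ((Finset.mem_filter.mp he).2).1⟩

/-- `σ(F)`: the minimum size of a color class over all proper `(k+1)`-colorings of `F`. -/
noncomputable def sigmaF {α : Type*} (F : SimpleGraph α) (k : ℕ) : ℕ :=
  sInf {m | ∃ c : α → Fin (k + 1), (∀ a b, F.Adj a b → c a ≠ c b) ∧
    ∃ i, m = Nat.card {a // c a = i}}

/-- The number of neighbors of `v` (in the graph `G`) lying in the part `i` of the
partition `P`. -/
noncomputable def nbrCount {n k : ℕ} (G : SimpleGraph (Fin n)) (P : Fin n → Fin k)
    (v : Fin n) (i : Fin k) : ℕ :=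
  (Finset.univ.filter (fun w => G.Adj v w ∧ P w = i)).card

/-- The size of the part `i` of the partition `P`. -/
noncomputable def partSize {n k : ℕ} (P : Fin n → Fin k) (i : Fin k) : ℕ :=
  (Finset.univ.filter (fun v => P v = i)).card

/-- Every copy (in the graph `G`) of a member of the decomposition family `D(F)` that lies
inside a single part of the partition `P` has at least two vertices in `B`. -/
def DecompInB {α : Type*} {n k : ℕ} (F : SimpleGraph α) (G : SimpleGraph (Fin n))
    (P : Fin n → Fin k) (B : Finset (Fin n)) : Prop :=
  ∀ c : α → Fin (k + 1), (∀ a b, F.Adj a b → c a ≠ c b) →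
    ∀ i j : Fin (k + 1), i ≠ j →
      ∀ ψ : {a : α // c a = i ∨ c a = j} ↪ Fin n,
        (∀ a b : {a : α // c a = i ∨ c a = j}, F.Adj a.1 b.1 → G.Adj (ψ a) (ψ b)) →
        (∀ a b : {a : α // c a = i ∨ c a = j}, P (ψ a) = P (ψ b)) →
        ∃ a b : {a : α // c a = i ∨ c a = j}, a ≠ b ∧ ψ a ∈ B ∧ ψ b ∈ B

/-!
A copy of `F^{(i)+}` in the `i`-graph of `t`-fat sets has at most `|V(F)| + (i-2)|E(F)|`
vertices. Each of its hyperedges `A` is the kernel of a sunflower in `G` with `t` pairwise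
disjoint petals, so a set of fewer than `t` vertices outside `A` misses one of the petals.
Choosing petals greedily, edge by edge, away from the copy and from the `(r-i)|E(F)|` petal
vertices chosen so far enlarges the copy to a copy of `F^{(r)+}` in `G`.
-/

namespace Finset

variable {ι β : Type*} [DecidableEq ι] [DecidableEq β]

theorem exists_pairwiseDisjoint_of_forall_exists_disjoint (p : ι → Finset β → Prop) (m n : ℕ)
    (T : Finset ι) (hT : #T ≤ n)
    (h : ∀ f ∈ T, ∀ Y : Finset β, #Y ≤ m * n → ∃ s, p f s ∧ #s ≤ m ∧ Disjoint s Y) :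
    ∃ P : ι → Finset β, (∀ f ∈ T, p f (P f) ∧ #(P f) ≤ m) ∧ (T : Set ι).PairwiseDisjoint P := by
  induction T using Finset.induction_on with
  | empty => exact ⟨fun _ => ∅, by simp⟩
  | @insert f T hf ih =>
    rw [card_insert_of_notMem hf] at hT
    obtain ⟨P, hP, hPT⟩ := ih (by omega) fun g hg => h g (mem_insert_of_mem hg)
    have hY : #(T.biUnion P) ≤ m * n :=
      calc #(T.biUnion P) ≤ #T * m := card_biUnion_le_card_mul _ _ _ fun g hg => (hP g hg).2
        _ ≤ m * n := by rw [mul_comm]; exact Nat.mul_le_mul_left m (by omega)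
    obtain ⟨s, hs, hsm, hsY⟩ := h f (mem_insert_self f T) _ hY
    have hupdate : ∀ g ∈ T, Function.update P f s g = P g := fun g hg =>
      Function.update_of_ne (ne_of_mem_of_not_mem hg hf) _ _
    refine ⟨Function.update P f s, fun g hg => ?_, ?_⟩
    · rcases mem_insert.1 hg with rfl | hg
      · simpa using ⟨hs, hsm⟩
      · rw [hupdate g hg]; exact hP g hg
    · rw [coe_insert, Set.pairwiseDisjoint_insert_of_notMem (by simpa using hf)]
      refine ⟨fun g hg g' hg' hne => ?_, fun g hg => ?_⟩
      · simpa only [Function.onFun, hupdate g hg, hupdate g' hg'] using hPT hg hg' hne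
      · rw [Function.update_self, hupdate g hg]
        exact (disjoint_biUnion_right _ _ _).1 hsY g hg

end Finset

section Fat

variable {V : Type*} [DecidableEq V] {r t : ℕ} {G : HyperGraph V r} {A X : Finset V}

theorem TFat.exists_mem_edges_disjoint_sdiff (hA : TFat t G A) (ht : 2 ≤ t)
    (hX : #(X \ A) < t) : ∃ e ∈ G.edges, A ⊆ e ∧ Disjoint (e \ A) X := by
  obtain ⟨E, hEG, htE, hEA⟩ := hA
  obtain ⟨e, heE, hegood⟩ : ∃ e ∈ E, Disjoint (e \ A) X := by
    by_contra! hbad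
    have hdisj : (E : Set (Finset V)).PairwiseDisjoint fun e => (e \ A) ∩ X := by
      intro e he e' he' hne
      refine disjoint_left.2 fun x hx hx' => ?_
      simp only [mem_inter, mem_sdiff] at hx hx'
      exact hx.1.2 (hEA e he e' he' hne ▸ mem_inter.2 ⟨hx.1.1, hx'.1.1⟩)
    have : #E ≤ #(X \ A) :=
      (card_le_card_biUnion hdisj fun e he => not_disjoint_iff_nonempty_inter.1 (hbad e he)).trans
        (card_le_card (biUnion_subset.2 fun e _ x hx => by
          simp only [mem_inter, mem_sdiff] at hx ⊢; exact ⟨hx.2, hx.1.2⟩))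
    omega
  obtain ⟨e', he'E, hne⟩ := exists_mem_ne (by omega : 1 < #E) e
  exact ⟨e, hEG heE, hEA e' he'E e heE hne ▸ inter_subset_right, hegood⟩

theorem TFat.exists_petal (hA : TFat t G A) (hA2 : 2 ≤ #A) (hAX : A ⊆ X) (hXt : #X ≤ t) :
    ∃ p, A ∪ p ∈ G.edges ∧ #p = r - #A ∧ Disjoint p X := by
  have hAX_card := card_le_card hAX
  obtain ⟨e, heG, hAe, heX⟩ := hA.exists_mem_edges_disjoint_sdiff (by omega)
    (by rw [card_sdiff_of_subset hAX]; omega)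
  exact ⟨e \ A, by rwa [union_sdiff_of_subset hAe],
    by rw [card_sdiff_of_subset hAe, G.uniform e heG], heX⟩

end Fat

namespace HyperGraph

variable {V α : Type*} [DecidableEq V]

def expansionEdge (φ : α ↪ V) (S : Sym2 α → Finset V) (e : Sym2 α) : Finset V :=
  (e.map φ).toFinset ∪ S e

theorem expansionEdge_mk (φ : α ↪ V) (S : Sym2 α → Finset V) (a b : α) :
    expansionEdge φ S s(a, b) = insert (φ a) (insert (φ b) (S s(a, b))) := by
  simp [expansionEdge, Sym2.toFinset_mk_eq, insert_union]

noncomputable def expansionVertices [Fintype α] (F : SimpleGraph α) (φ : α ↪ V)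
    (S : Sym2 α → Finset V) : Finset V :=
  univ.image φ ∪ F.edgeFinset.biUnion S

variable {F : SimpleGraph α} {φ : α ↪ V} {S : Sym2 α → Finset V}

theorem IsExpansionWitness.expansionEdge_mem {i : ℕ} {H : HyperGraph V i}
    (hw : H.IsExpansionWitness F φ S) {e : Sym2 α} (he : e ∈ F.edgeSet) :
    expansionEdge φ S e ∈ H.edges := by
  induction e using Sym2.ind with
  | _ a b => rw [expansionEdge_mk]; exact hw.2.2.2 a b he

variable [Fintype α]

theorem expansionEdge_subset_expansionVertices {e : Sym2 α} (he : e ∈ F.edgeSet) :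
    expansionEdge φ S e ⊆ expansionVertices F φ S := by
  induction e using Sym2.ind with
  | _ a b =>
    rw [expansionEdge_mk]
    refine insert_subset (mem_union_left _ (mem_image_of_mem φ (mem_univ a)))
      (insert_subset (mem_union_left _ (mem_image_of_mem φ (mem_univ b))) ?_)
    exact (subset_biUnion_of_mem S (by simpa using he)).trans subset_union_right

theorem IsExpansionWitness.card_expansionVertices_le {i : ℕ} {H : HyperGraph V i}
    (hw : H.IsExpansionWitness F φ S) :
    #(expansionVertices F φ S) ≤ Fintype.card α + (i - 2) * #F.edgeFinset := by
  refine (card_union_le _ _).trans (Nat.add_le_add card_image_le ?_)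
  rw [mul_comm]
  refine card_biUnion_le_card_mul _ _ _ fun e he => ?_
  induction e using Sym2.ind with
  | _ a b => exact (hw.1 a b (by simpa using he)).le

theorem IsExpansionWitness.union_petals {i r : ℕ} {H : HyperGraph V i} {G : HyperGraph V r}
    {P : Sym2 α → Finset V} (hw : H.IsExpansionWitness F φ S)
    (hPG : ∀ e ∈ F.edgeSet, expansionEdge φ S e ∪ P e ∈ G.edges)
    (hPB : ∀ e ∈ F.edgeSet, Disjoint (P e) (expansionVertices F φ S))
    (hPP : F.edgeSet.PairwiseDisjoint P) :
    G.IsExpansionWitness F φ (fun e => S e ∪ P e) := by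
  obtain ⟨-, hSφ, hSS, -⟩ := hw
  have hPφ : ∀ e ∈ F.edgeSet, ∀ x ∈ P e, x ∉ Set.range φ := by
    rintro e he _ hx ⟨a, rfl⟩
    exact disjoint_left.1 (hPB e he) hx (mem_union_left _ (mem_image_of_mem φ (mem_univ a)))
  have hPS : ∀ e ∈ F.edgeSet, ∀ e' ∈ F.edgeSet, Disjoint (P e) (S e') := fun e he e' he' =>
    (hPB e he).mono_right ((subset_biUnion_of_mem S (by simpa using he')).trans subset_union_right)
  have hmem : ∀ a b, F.Adj a b →
      insert (φ a) (insert (φ b) (S s(a, b) ∪ P s(a, b))) ∈ G.edges := fun a b hab => by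
    simpa only [expansionEdge_mk, insert_union] using hPG s(a, b) hab
  refine ⟨fun a b hab => ?_, fun a b hab x hx => ?_, fun e he e' he' hne => ?_, hmem⟩
  · dsimp only
    have hnot : ∀ c, φ c ∉ S s(a, b) ∪ P s(a, b) := fun c hc =>
      (mem_union.1 hc).elim (hSφ a b hab _ · ⟨c, rfl⟩) (hPφ _ hab _ · ⟨c, rfl⟩)
    have hcard := G.uniform _ (hmem a b hab)
    rw [card_insert_of_notMem, card_insert_of_notMem (hnot b)] at hcard
    · omega
    · simpa [φ.injective.ne hab.ne] using hnot a
  · exact (mem_union.1 hx).elim (hSφ a b hab x) (hPφ _ hab x)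
  · exact disjoint_union_left.2
      ⟨disjoint_union_right.2 ⟨hSS e he e' he' hne, (hPS e' he' e he).symm⟩,
        disjoint_union_right.2 ⟨hPS e he e' he', hPP he he' hne⟩⟩

variable [Fintype V] {r t i : ℕ} {G : HyperGraph V r}

theorem IsExpansionWitness.exists_petals_of_fatHyper (hi : 2 ≤ i) (hir : i ≤ r)
    (ht : t = (r - 2) * Nat.card F.edgeSet + Fintype.card α)
    (hw : (fatHyper t i G).IsExpansionWitness F φ S) :
    ∃ P : Sym2 α → Finset V, (∀ e ∈ F.edgeSet, expansionEdge φ S e ∪ P e ∈ G.edges) ∧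
      (∀ e ∈ F.edgeSet, Disjoint (P e) (expansionVertices F φ S)) ∧
      F.edgeSet.PairwiseDisjoint P := by
  have hB := hw.card_expansionVertices_le
  set B := expansionVertices F φ S
  have hBt : #B + (r - i) * #F.edgeFinset ≤ t := by
    have hE : Nat.card F.edgeSet = #F.edgeFinset := by
      rw [Nat.card_eq_fintype_card, SimpleGraph.edgeFinset_card]
    have hri : (i - 2) * #F.edgeFinset + (r - i) * #F.edgeFinset = (r - 2) * #F.edgeFinset := by
      rw [← Nat.add_mul]; congr 1; omega
    rw [ht, hE]
    omega
  obtain ⟨P, hP, hPP⟩ := exists_pairwiseDisjoint_of_forall_exists_disjoint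
    (fun e p => expansionEdge φ S e ∪ p ∈ G.edges ∧ Disjoint p B) (r - i) #F.edgeFinset
    F.edgeFinset le_rfl fun e he Y hY => by
      rw [SimpleGraph.mem_edgeFinset] at he
      obtain ⟨-, hAcard, hAfat⟩ := mem_filter.1 (hw.expansionEdge_mem he)
      obtain ⟨p, hpG, hpcard, hpX⟩ := hAfat.exists_petal (by omega)
        ((expansionEdge_subset_expansionVertices he).trans subset_union_left)
        ((card_union_le B Y).trans (by omega))
      exact ⟨p, ⟨hpG, (disjoint_union_right.1 hpX).1⟩, by omega, (disjoint_union_right.1 hpX).2⟩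
  exact ⟨P, fun e he => (hP e (by simpa using he)).1.1,
    fun e he => (hP e (by simpa using he)).1.2, by simpa using hPP⟩

end HyperGraph

theorem statement_9_general {α V : Type*} [Fintype α] [Fintype V] [DecidableEq V]
    (F : SimpleGraph α) (r t i : ℕ) (hi : 2 ≤ i) (hir : i ≤ r)
    (ht : t = (r - 2) * Nat.card F.edgeSet + Fintype.card α)
    (G : HyperGraph V r) (hG : ¬ G.ContainsExpansion F) :
    ¬ (fatHyper t i G).ContainsExpansion F := by
  rintro ⟨φ, S, hw⟩
  obtain ⟨P, hPG, hPB, hPP⟩ := hw.exists_petals_of_fatHyper hi hir ht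
  exact hG ⟨φ, fun e => S e ∪ P e, hw.union_petals hPG hPB hPP⟩

/-- With `t = (r−2)|E(F)| + |V(F)|` and `2 ≤ i ≤ r`, if the `r`-graph `G`
is `F^{(r)+}`-free, then the `i`-graph of `t`-fat `i`-sets of `G` is `F^{(i)+}`-free. -/
theorem statement_9 {α V : Type*} [Fintype α] [Fintype V] [DecidableEq V]
    (F : SimpleGraph α) (r t i : ℕ) (hr : 2 ≤ r) (hi : 2 ≤ i) (hir : i ≤ r)
    (ht : t = (r - 2) * Nat.card F.edgeSet + Fintype.card α)
    (G : HyperGraph V r) (hG : ¬ G.ContainsExpansion F) :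
    ¬ (fatHyper t i G).ContainsExpansion F :=
  statement_9_general F r t i hi hir ht G hG
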